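/- arXiv:2505.06760 — 5 statements merged into one kernel-verified Lean document; each statement's English description precedes it below -/
import Mathlib

section
/- The subspace stability measure is monotone decreasing under set inclusion: if S̃ ⊆ S and col(X_{S̃}) ⊆ col(X_S), then π(S̃) ≥ π(S), where π(S) is the |S|-th largest eigenvalue of P_{col(X_S)} · P_avg · P_{col(X_S)} for any fixed PSD matrix P_avg with all eigenvalues in [0,1], assuming the columns X_S are linearly independent. -/
/-!
For an orthogonal projection `Q` of rank `k` and `P ⪰ 0`, the compression `Q P Q` vanishes on
`ker Q`, so by Courant–Fischer its `k`-th largest eigenvalue is the minimum of `v ⬝ᵥ P *ᵥ v` over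
unit vectors `v ∈ range Q`. Since `range Q₁ ⊆ range Q₂`, the minimum over the smaller space is
the larger one.
-/

open Matrix

/-- The `k`-th largest eigenvalue (1-indexed) of a real symmetric matrix `A`
(by convention `0` if `A` is not Hermitian or `k` is out of range). -/
noncomputable def kthEig {n : ℕ} (A : Matrix (Fin n) (Fin n) ℝ) (k : ℕ) : ℝ :=
  if h : A.IsHermitian ∧ 0 < k ∧ k ≤ n then
    h.1.eigenvalues (Tuple.sort h.1.eigenvalues ⟨n - k, by obtain ⟨-, h1, h2⟩ := h; omega⟩)
  else 0

open Module Submodule Finset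

theorem EuclideanSpace.ofLp_dotProduct_ofLp {ι : Type*} [Fintype ι] (x y : EuclideanSpace ℝ ι) :
    x.ofLp ⬝ᵥ y.ofLp = inner ℝ x y := by
  rw [EuclideanSpace.inner_eq_star_dotProduct, star_trivial, dotProduct_comm]

theorem Submodule.inf_ne_bot_of_finrank_lt_add {K E : Type*} [DivisionRing K] [AddCommGroup E]
    [Module K E] [FiniteDimensional K E] (U W : Submodule K E)
    (h : finrank K E < finrank K U + finrank K W) : U ⊓ W ≠ ⊥ := by
  intro hbot
  have hsum := finrank_sup_add_finrank_inf_eq U W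
  have hle := finrank_le (U ⊔ W)
  rw [hbot, finrank_bot] at hsum
  omega

theorem LinearIndepOn.finrank_span_image_finset {ι K E : Type*} [DivisionRing K]
    [AddCommGroup E] [Module K E] {f : ι → E} {s : Finset ι} (hf : LinearIndepOn K f s) :
    finrank K (span K (f '' s)) = #s := by
  rw [Set.image_eq_range]
  exact (finrank_span_eq_card hf).trans (Fintype.card_coe s)

namespace Matrix.IsHermitian

variable {n : ℕ} {A : Matrix (Fin n) (Fin n) ℝ}

/-- By a dimension count `V` meets the span of the eigenvectors indexed by `s`; `c` are the
coordinates of `v` in the eigenvector basis. -/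
theorem exists_unit_mem_rayleigh_eq_sum (hA : A.IsHermitian) (s : Finset (Fin n))
    (V : Submodule ℝ (Fin n → ℝ)) (hdim : n < #s + finrank ℝ V) :
    ∃ v ∈ V, v ⬝ᵥ v = 1 ∧ ∃ c : Fin n → ℝ, ∑ i ∈ s, c i ^ 2 = 1 ∧
      v ⬝ᵥ A *ᵥ v = ∑ i ∈ s, c i ^ 2 * hA.eigenvalues i := by
  let b := hA.eigenvectorBasis
  have hV : finrank ℝ (V.comap (WithLp.linearEquiv 2 ℝ (Fin n → ℝ)).toLinearMap) =
      finrank ℝ V := by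
    rw [comap_equiv_eq_map_symm, LinearEquiv.finrank_map_eq]
  have hW : finrank ℝ (span ℝ (b '' s)) = #s := by
    rw [Set.image_eq_range]
    exact (finrank_span_eq_card (b.orthonormal.linearIndependent.comp _
      Subtype.val_injective)).trans (Fintype.card_coe s)
  obtain ⟨x, hx, hx0⟩ := exists_mem_ne_zero_of_ne_bot <|
    Submodule.inf_ne_bot_of_finrank_lt_add
      (V.comap (WithLp.linearEquiv 2 ℝ (Fin n → ℝ)).toLinearMap) (span ℝ (b '' s)) <| by
      rw [hV, hW, finrank_euclideanSpace_fin]; omega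
  obtain ⟨hxV, hxW⟩ := smul_mem _ ‖x‖⁻¹ hx
  obtain ⟨c, hc⟩ := (mem_span_image_finset_iff_exists_fun' ℝ).mp hxW
  have hv : ‖∑ i ∈ s, c i • b i‖ = 1 := hc ▸ norm_smul_inv_norm hx0
  have hAb : ∀ i, A *ᵥ (b i).ofLp = hA.eigenvalues i • (b i).ofLp := hA.mulVec_eigenvectorBasis
  have hAv : A *ᵥ (∑ i ∈ s, c i • b i).ofLp =
      (∑ i ∈ s, (c i * hA.eigenvalues i) • b i).ofLp := by
    simp only [WithLp.ofLp_sum, WithLp.ofLp_smul, mulVec_sum, mulVec_smul, hAb, smul_smul]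
  refine ⟨(∑ i ∈ s, c i • b i).ofLp, hc ▸ hxV, ?_, c, ?_, ?_⟩
  · rw [EuclideanSpace.ofLp_dotProduct_ofLp, real_inner_self_eq_norm_sq, hv, one_pow]
  · rw [← one_pow 2, ← hv, ← real_inner_self_eq_norm_sq, b.orthonormal.inner_sum]
    simp only [conj_trivial, sq]
  · rw [hAv, EuclideanSpace.ofLp_dotProduct_ofLp, b.orthonormal.inner_sum]
    simp only [conj_trivial, sq, mul_assoc]

theorem exists_rayleigh_le (hA : A.IsHermitian) (V : Submodule ℝ (Fin n → ℝ)) {μ : ℝ}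
    (hdim : n < #{i | hA.eigenvalues i ≤ μ} + finrank ℝ V) :
    ∃ v ∈ V, v ⬝ᵥ v = 1 ∧ v ⬝ᵥ A *ᵥ v ≤ μ := by
  obtain ⟨v, hvV, hvv, c, hc, hAv⟩ := hA.exists_unit_mem_rayleigh_eq_sum _ V hdim
  refine ⟨v, hvV, hvv, ?_⟩
  calc v ⬝ᵥ A *ᵥ v ≤ ∑ i ∈ {i | hA.eigenvalues i ≤ μ}, c i ^ 2 * μ :=
        hAv ▸ sum_le_sum fun i hi => by gcongr; exact (mem_filter.mp hi).2
    _ = μ := by rw [← sum_mul, hc, one_mul]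

theorem exists_le_rayleigh (hA : A.IsHermitian) (V : Submodule ℝ (Fin n → ℝ)) {μ : ℝ}
    (hdim : n < #{i | μ ≤ hA.eigenvalues i} + finrank ℝ V) :
    ∃ v ∈ V, v ⬝ᵥ v = 1 ∧ μ ≤ v ⬝ᵥ A *ᵥ v := by
  obtain ⟨v, hvV, hvv, c, hc, hAv⟩ := hA.exists_unit_mem_rayleigh_eq_sum _ V hdim
  refine ⟨v, hvV, hvv, ?_⟩
  calc μ = ∑ i ∈ {i | μ ≤ hA.eigenvalues i}, c i ^ 2 * μ := by rw [← sum_mul, hc, one_mul]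
    _ ≤ v ⬝ᵥ A *ᵥ v := hAv ▸ sum_le_sum fun i hi => by gcongr; exact (mem_filter.mp hi).2

variable {k : ℕ}

theorem kthEig_eq (hA : A.IsHermitian) (hk0 : 0 < k) (hkn : k ≤ n) :
    kthEig A k = hA.eigenvalues (Tuple.sort hA.eigenvalues ⟨n - k, by omega⟩) := by
  rw [kthEig, dif_pos ⟨hA, hk0, hkn⟩]

theorem lt_card_eigenvalues_le_kthEig (hA : A.IsHermitian) (hk0 : 0 < k) (hkn : k ≤ n) :
    n - k < #{i | hA.eigenvalues i ≤ kthEig A k} := by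
  calc n - k < #(Iic (⟨n - k, by omega⟩ : Fin n)) := by rw [Fin.card_Iic, Fin.val_mk]; omega
    _ = #((Iic ⟨n - k, by omega⟩).image (Tuple.sort hA.eigenvalues)) :=
        (card_image_of_injective _ (Equiv.injective _)).symm
    _ ≤ _ := card_le_card fun i hi => by
        obtain ⟨j, hj, rfl⟩ := mem_image.mp hi
        rw [mem_filter, hA.kthEig_eq hk0 hkn]
        exact ⟨mem_univ _, Tuple.monotone_sort hA.eigenvalues (mem_Iic.mp hj)⟩

theorem le_card_kthEig_le_eigenvalues (hA : A.IsHermitian) (hk0 : 0 < k) (hkn : k ≤ n) :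
    k ≤ #{i | kthEig A k ≤ hA.eigenvalues i} := by
  calc k = #(Ici (⟨n - k, by omega⟩ : Fin n)) := by rw [Fin.card_Ici, Fin.val_mk]; omega
    _ = #((Ici ⟨n - k, by omega⟩).image (Tuple.sort hA.eigenvalues)) :=
        (card_image_of_injective _ (Equiv.injective _)).symm
    _ ≤ _ := card_le_card fun i hi => by
        obtain ⟨j, hj, rfl⟩ := mem_image.mp hi
        rw [mem_filter, hA.kthEig_eq hk0 hkn]
        exact ⟨mem_univ _, Tuple.monotone_sort hA.eigenvalues (mem_Ici.mp hj)⟩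

theorem exists_rayleigh_le_kthEig (hA : A.IsHermitian) (hk0 : 0 < k) (hkn : k ≤ n)
    (V : Submodule ℝ (Fin n → ℝ)) (hV : k ≤ finrank ℝ V) :
    ∃ v ∈ V, v ⬝ᵥ v = 1 ∧ v ⬝ᵥ A *ᵥ v ≤ kthEig A k :=
  hA.exists_rayleigh_le V <| by have := hA.lt_card_eigenvalues_le_kthEig hk0 hkn; omega

theorem exists_kthEig_le_rayleigh (hA : A.IsHermitian) (hk0 : 0 < k) (hkn : k ≤ n)
    (V : Submodule ℝ (Fin n → ℝ)) (hV : n - k < finrank ℝ V) :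
    ∃ v ∈ V, v ⬝ᵥ v = 1 ∧ kthEig A k ≤ v ⬝ᵥ A *ᵥ v :=
  hA.exists_le_rayleigh V <| by have := hA.le_card_kthEig_le_eigenvalues hk0 hkn; omega

end Matrix.IsHermitian

namespace Matrix

section

variable {ι : Type*} [Fintype ι] {Q P : Matrix ι ι ℝ}

theorem IsHermitian.dotProduct_mulVec_comm (hQ : Q.IsHermitian) (x y : ι → ℝ) :
    x ⬝ᵥ Q *ᵥ y = Q *ᵥ x ⬝ᵥ y := by
  rw [dotProduct_mulVec, ← mulVec_transpose, ← conjTranspose_eq_transpose_of_trivial, hQ.eq]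

theorem IsHermitian.dotProduct_mul_mul_mulVec (hQ : Q.IsHermitian) (x : ι → ℝ) :
    x ⬝ᵥ (Q * P * Q) *ᵥ x = Q *ᵥ x ⬝ᵥ P *ᵥ (Q *ᵥ x) := by
  rw [← mulVec_mulVec, ← mulVec_mulVec, hQ.dotProduct_mulVec_comm]

theorem mulVec_eq_self_of_mem_range (hQQ : Q * Q = Q) {v : ι → ℝ}
    (hv : v ∈ LinearMap.range Q.mulVecLin) : Q *ᵥ v = v := by
  obtain ⟨u, rfl⟩ := hv
  rw [mulVecLin_apply, mulVec_mulVec, hQQ]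

theorem IsHermitian.dotProduct_eq_zero_of_mem_ker_of_mem_range (hQ : Q.IsHermitian)
    (hQQ : Q * Q = Q) {u v : ι → ℝ} (hu : u ∈ LinearMap.ker Q.mulVecLin)
    (hv : v ∈ LinearMap.range Q.mulVecLin) : u ⬝ᵥ v = 0 := by
  rw [← mulVec_eq_self_of_mem_range hQQ hv, hQ.dotProduct_mulVec_comm,
    show Q *ᵥ u = 0 from hu, zero_dotProduct]

theorem IsHermitian.mul_mul (hQ : Q.IsHermitian) (hP : P.IsHermitian) :
    (Q * P * Q).IsHermitian := by
  simpa only [hQ.eq] using isHermitian_conjTranspose_mul_mul Q hP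

end

variable {n : ℕ} {Q P : Matrix (Fin n) (Fin n) ℝ}

theorem finrank_range_mulVecLin_le (Q : Matrix (Fin n) (Fin n) ℝ) :
    finrank ℝ (LinearMap.range Q.mulVecLin) ≤ n :=
  (finrank_le _).trans_eq (finrank_fin_fun ℝ)

variable {k : ℕ}

theorem exists_rayleigh_le_kthEig_mul_mul (hQ : Q.IsHermitian) (hQQ : Q * Q = Q)
    (hP : P.IsHermitian) (hk0 : 0 < k) (hk : finrank ℝ (LinearMap.range Q.mulVecLin) = k) :
    ∃ v ∈ LinearMap.range Q.mulVecLin, v ⬝ᵥ v = 1 ∧ v ⬝ᵥ P *ᵥ v ≤ kthEig (Q * P * Q) k := by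
  obtain ⟨v, hv, hvv, hle⟩ := (hQ.mul_mul hP).exists_rayleigh_le_kthEig hk0
    (hk ▸ Q.finrank_range_mulVecLin_le) _ hk.ge
  refine ⟨v, hv, hvv, ?_⟩
  rwa [hQ.dotProduct_mul_mul_mulVec, mulVec_eq_self_of_mem_range hQQ hv] at hle

/-- Courant–Fischer on `ker Q ⊔ ℝ ∙ v`, of dimension `n - k + 1`: every `w = u + t • v` there has
`Q *ᵥ w = t • v` with `t ^ 2 ≤ 1`. -/
theorem kthEig_mul_mul_le_rayleigh (hQ : Q.IsHermitian) (hQQ : Q * Q = Q) (hP : P.PosSemidef)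
    (hk0 : 0 < k) (hk : finrank ℝ (LinearMap.range Q.mulVecLin) = k) {v : Fin n → ℝ}
    (hv : v ∈ LinearMap.range Q.mulVecLin) (hvv : v ⬝ᵥ v = 1) :
    kthEig (Q * P * Q) k ≤ v ⬝ᵥ P *ᵥ v := by
  have hQv := mulVec_eq_self_of_mem_range hQQ hv
  have hv_ker : v ∉ LinearMap.ker Q.mulVecLin := fun h => by
    rw [LinearMap.mem_ker, mulVecLin_apply, hQv] at h
    simp [h] at hvv
  have hdim : n - k < finrank ℝ ↥(LinearMap.ker Q.mulVecLin ⊔ span ℝ {v}) := by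
    have hker := LinearMap.finrank_range_add_finrank_ker Q.mulVecLin
    have hlt := finrank_lt_finrank_of_lt <| SetLike.lt_iff_le_and_exists.mpr
      ⟨le_sup_left, v, mem_sup_right (mem_span_singleton_self v), hv_ker⟩
    rw [finrank_fin_fun] at hker
    omega
  obtain ⟨w, hw, hww, hle⟩ := (hQ.mul_mul hP.1).exists_kthEig_le_rayleigh hk0
    (hk ▸ Q.finrank_range_mulVecLin_le) _ hdim
  obtain ⟨u, hu, _, hz, rfl⟩ := mem_sup.mp hw
  obtain ⟨t, rfl⟩ := mem_span_singleton.mp hz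
  have hQw : Q *ᵥ (u + t • v) = t • v := by
    rw [mulVec_add, mulVec_smul, show Q *ᵥ u = 0 from hu, hQv, zero_add]
  have huv := hQ.dotProduct_eq_zero_of_mem_ker_of_mem_range hQQ hu hv
  have ht : t ^ 2 ≤ 1 := by
    have huu : 0 ≤ u ⬝ᵥ u := by simpa using dotProduct_self_star_nonneg u
    have : (u + t • v) ⬝ᵥ (u + t • v) = u ⬝ᵥ u + t ^ 2 := by
      simp only [add_dotProduct, dotProduct_add, smul_dotProduct, dotProduct_smul, huv,
        dotProduct_comm v u, hvv, smul_eq_mul]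
      ring
    linarith
  have hPv : 0 ≤ v ⬝ᵥ P *ᵥ v := by simpa using hP.dotProduct_mulVec_nonneg v
  calc kthEig (Q * P * Q) k ≤ t • v ⬝ᵥ P *ᵥ (t • v) := by
        rwa [hQ.dotProduct_mul_mul_mulVec, hQw] at hle
    _ = t ^ 2 * (v ⬝ᵥ P *ᵥ v) := by
        rw [mulVec_smul, smul_dotProduct, dotProduct_smul, smul_eq_mul, smul_eq_mul]; ring
    _ ≤ v ⬝ᵥ P *ᵥ v := mul_le_of_le_one_left hPv ht

end Matrix

theorem stmt4_general {n p : ℕ} (X : Matrix (Fin n) (Fin p) ℝ)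
    (Pavg : Matrix (Fin n) (Fin n) ℝ)
    (hpsd : Pavg.PosSemidef)
    (S₁ S₂ : Finset (Fin p)) (hS : S₁ ⊆ S₂) (hne : S₁.Nonempty)
    (hlin : LinearIndependent ℝ (fun j : S₂ => (fun i => X i j.1)))
    (Q₁ Q₂ : Matrix (Fin n) (Fin n) ℝ)
    (hQ₁h : Q₁.IsHermitian) (hQ₁i : Q₁ * Q₁ = Q₁)
    (hr₁ : LinearMap.range Q₁.mulVecLin
        = Submodule.span ℝ ((fun j => fun i => X i j) '' (S₁ : Set (Fin p))))
    (hQ₂h : Q₂.IsHermitian) (hQ₂i : Q₂ * Q₂ = Q₂)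
    (hr₂ : LinearMap.range Q₂.mulVecLin
        = Submodule.span ℝ ((fun j => fun i => X i j) '' (S₂ : Set (Fin p)))) :
    kthEig (Q₂ * Pavg * Q₂) S₂.card ≤ kthEig (Q₁ * Pavg * Q₁) S₁.card := by
  have hlin₂ : LinearIndepOn ℝ (fun j i => X i j) (S₂ : Set (Fin p)) := hlin
  obtain ⟨v, hv₁, hvv, hle⟩ := exists_rayleigh_le_kthEig_mul_mul hQ₁h hQ₁i hpsd.1
    (card_pos.mpr hne) (hr₁ ▸ (hlin₂.mono (coe_subset.mpr hS)).finrank_span_image_finset)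
  have hv₂ : v ∈ LinearMap.range Q₂.mulVecLin :=
    hr₂ ▸ span_mono (Set.image_mono (coe_subset.mpr hS)) (hr₁ ▸ hv₁)
  exact (kthEig_mul_mul_le_rayleigh hQ₂h hQ₂i hpsd ((card_pos.mpr hne).trans_le (card_le_card hS))
    (hr₂ ▸ hlin₂.finrank_span_image_finset) hv₂ hvv).trans hle

/-- The stability measure `π(S) = σ_{|S|}(P_{col(X_S)} P_avg P_{col(X_S)})` is antitone
under set inclusion: if `S₁ ⊆ S₂` and the columns `X_{S₂}` are linearly independent, then
`π(S₁) ≥ π(S₂)`, for any PSD matrix `P_avg` with eigenvalues in `[0,1]`. -/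
theorem stmt4 {n p : ℕ} (X : Matrix (Fin n) (Fin p) ℝ)
    (Pavg : Matrix (Fin n) (Fin n) ℝ)
    (hpsd : Pavg.PosSemidef) (hle : (1 - Pavg).PosSemidef)
    (S₁ S₂ : Finset (Fin p)) (hS : S₁ ⊆ S₂) (hne : S₁.Nonempty)
    (hlin : LinearIndependent ℝ (fun j : S₂ => (fun i => X i j.1)))
    (Q₁ Q₂ : Matrix (Fin n) (Fin n) ℝ)
    (hQ₁h : Q₁.IsHermitian) (hQ₁i : Q₁ * Q₁ = Q₁)
    (hr₁ : LinearMap.range Q₁.mulVecLin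
        = Submodule.span ℝ ((fun j => fun i => X i j) '' (S₁ : Set (Fin p))))
    (hQ₂h : Q₂.IsHermitian) (hQ₂i : Q₂ * Q₂ = Q₂)
    (hr₂ : LinearMap.range Q₂.mulVecLin
        = Submodule.span ℝ ((fun j => fun i => X i j) '' (S₂ : Set (Fin p)))) :
    kthEig (Q₂ * Pavg * Q₂) S₂.card ≤ kthEig (Q₁ * Pavg * Q₁) S₁.card :=
  stmt4_general X Pavg hpsd S₁ S₂ hS hne hlin Q₁ Q₂ hQ₁h hQ₁i hr₁ hQ₂h hQ₂i hr₂
end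

section
/- Let A = Σ_{i=1}^k X_i X_i^T where X_1,…,X_k ∈ R^n are unit vectors with n > k and pairwise inner products bounded: |X_i^T X_j| ≤ η₀ for all i ≠ j. If η₀ < 1/(k³(k−1)), then the k-th largest eigenvalue of A satisfies λ_k(A) ≥ (1 + √(1 − 4k(k−1)η₀))/2, and λ_j(A) = 0 for all j > k. -/
open Matrix

open Finset

lemma Matrix.IsHermitian.dotProduct_eigenvectorBasis_self {m : Type*} [Fintype m]
    [DecidableEq m] {A : Matrix m m ℝ} (hA : A.IsHermitian) (i : m) :
    ⇑(hA.eigenvectorBasis i) ⬝ᵥ ⇑(hA.eigenvectorBasis i) = 1 := by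
  have := real_inner_self_eq_norm_sq (hA.eigenvectorBasis i)
  rw [hA.eigenvectorBasis.orthonormal.1 i, EuclideanSpace.inner_eq_star_dotProduct] at this
  simpa using this

section OffDiagonal

variable {ι : Type*} [Fintype ι] [DecidableEq ι]

lemma sum_sum_erase_abs_mul_abs_le (a : ι → ℝ) :
    ∑ i, ∑ j ∈ univ.erase i, |a i| * |a j| ≤ (Fintype.card ι - 1) * ∑ i, a i ^ 2 := by
  have hsplit : ∑ i, ∑ j ∈ univ.erase i, |a i| * |a j| = (∑ i, |a i|) ^ 2 - ∑ i, a i ^ 2 := by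
    rw [sq, sum_mul_sum, ← sum_sub_distrib]
    refine sum_congr rfl fun i _ => ?_
    rw [sum_erase_eq_sub (mem_univ i), abs_mul_abs_self, sq]
  have hcs : (∑ i, |a i|) ^ 2 ≤ Fintype.card ι * ∑ i, a i ^ 2 := by
    simpa using sq_sum_le_card_mul_sum_sq (s := univ) (f := fun i => |a i|)
  rw [hsplit]
  linarith

lemma abs_quadForm_sub_sum_sq_le (a : ι → ℝ) {G : ι → ι → ℝ} {η : ℝ} (hη : 0 ≤ η)
    (hdiag : ∀ i, G i i = 1) (hoff : ∀ i j, i ≠ j → |G i j| ≤ η) :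
    |∑ i, ∑ j, a i * a j * G i j - ∑ i, a i ^ 2| ≤ (Fintype.card ι - 1) * η * ∑ i, a i ^ 2 := by
  have hsplit : ∑ i, ∑ j, a i * a j * G i j - ∑ i, a i ^ 2
      = ∑ i, ∑ j ∈ univ.erase i, a i * a j * G i j := by
    rw [← sum_sub_distrib]
    refine sum_congr rfl fun i _ => ?_
    rw [sum_erase_eq_sub (mem_univ i), hdiag, sq, mul_one]
  calc |∑ i, ∑ j, a i * a j * G i j - ∑ i, a i ^ 2|
      ≤ ∑ i, ∑ j ∈ univ.erase i, |a i| * |a j| * η := by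
        rw [hsplit]
        refine (abs_sum_le_sum_abs _ _).trans (sum_le_sum fun i _ => ?_)
        refine (abs_sum_le_sum_abs _ _).trans (sum_le_sum fun j hj => ?_)
        rw [abs_mul, abs_mul]
        exact mul_le_mul_of_nonneg_left (hoff i j (ne_of_mem_erase hj).symm) (by positivity)
    _ = (∑ i, ∑ j ∈ univ.erase i, |a i| * |a j|) * η := by simp only [sum_mul]
    _ ≤ (Fintype.card ι - 1) * η * ∑ i, a i ^ 2 := by
        nlinarith [sum_sum_erase_abs_mul_abs_le a]

end OffDiagonal

section GramSum

variable {ι m : Type*} [Fintype ι] [Fintype m]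

lemma posSemidef_sum_vecMulVec_self (X : ι → m → ℝ) :
    (∑ i, vecMulVec (X i) (X i)).PosSemidef :=
  posSemidef_sum _ fun i _ => by simpa using posSemidef_vecMulVec_self_star (X i)

lemma trace_sum_vecMulVec_self {X : ι → m → ℝ} (hunit : ∀ i, X i ⬝ᵥ X i = 1) :
    (∑ i, vecMulVec (X i) (X i)).trace = Fintype.card ι := by
  simp [trace_sum, hunit]

lemma sum_vecMulVec_self_mulVec (X : ι → m → ℝ) (w : m → ℝ) :
    (∑ i, vecMulVec (X i) (X i)) *ᵥ w = ∑ i, (X i ⬝ᵥ w) • X i := by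
  simp [sum_mulVec, vecMulVec_mulVec]

lemma eigenvalue_sum_vecMulVec_self {X : ι → m → ℝ} {v : m → ℝ} {μ : ℝ}
    (hv : v ⬝ᵥ v = 1) (hXv : (∑ i, vecMulVec (X i) (X i)) *ᵥ v = μ • v) :
    μ = ∑ i, (X i ⬝ᵥ v) ^ 2 ∧
      μ ^ 2 = ∑ i, ∑ j, (X i ⬝ᵥ v) * (X j ⬝ᵥ v) * (X i ⬝ᵥ X j) := by
  rw [sum_vecMulVec_self_mulVec] at hXv
  constructor
  · calc μ = v ⬝ᵥ (μ • v) := by rw [dotProduct_smul, hv, smul_eq_mul, mul_one]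
      _ = ∑ i, (X i ⬝ᵥ v) ^ 2 := by
        rw [← hXv, dotProduct_sum]
        refine sum_congr rfl fun i _ => ?_
        rw [dotProduct_smul, smul_eq_mul, dotProduct_comm, sq]
  · calc μ ^ 2 = (μ • v) ⬝ᵥ (μ • v) := by
          rw [smul_dotProduct, dotProduct_smul, hv, smul_eq_mul, smul_eq_mul, mul_one, sq]
      _ = ∑ i, ∑ j, (X i ⬝ᵥ v) * (X j ⬝ᵥ v) * (X i ⬝ᵥ X j) := by
        simp only [← hXv, sum_dotProduct, dotProduct_sum, smul_dotProduct, dotProduct_smul,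
          smul_eq_mul, mul_sum]
        refine sum_congr rfl fun i _ => sum_congr rfl fun j _ => ?_
        rw [dotProduct_comm (X j) (X i)]
        ring

lemma abs_sq_sub_self_le_of_mulVec_eq_smul [DecidableEq ι] {X : ι → m → ℝ} {η : ℝ}
    (hη : 0 ≤ η) (hunit : ∀ i, X i ⬝ᵥ X i = 1) (hcorr : ∀ i j, i ≠ j → |X i ⬝ᵥ X j| ≤ η)
    {v : m → ℝ} {μ : ℝ} (hv : v ⬝ᵥ v = 1)
    (hXv : (∑ i, vecMulVec (X i) (X i)) *ᵥ v = μ • v) :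
    |μ ^ 2 - μ| ≤ (Fintype.card ι - 1) * η * μ := by
  obtain ⟨hμ, hμ2⟩ := eigenvalue_sum_vecMulVec_self hv hXv
  rw [hμ2, hμ]
  exact abs_quadForm_sub_sum_sq_le _ hη hunit hcorr

end GramSum

lemma eq_zero_or_abs_sub_one_le {μ c : ℝ} (hμ : 0 ≤ μ) (h : |μ ^ 2 - μ| ≤ c * μ) :
    μ = 0 ∨ |μ - 1| ≤ c := by
  rcases hμ.eq_or_lt with h0 | hpos
  · exact Or.inl h0.symm
  · right
    rw [show μ ^ 2 - μ = (μ - 1) * μ by ring, abs_mul, abs_of_pos hpos] at h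
    exact le_of_mul_le_mul_right h hpos

lemma card_filter_ne_zero_eq {κ : Type*} [Fintype κ] {μ : κ → ℝ} {c : ℝ} {k : ℕ}
    (hμ : ∀ i, μ i = 0 ∨ |μ i - 1| ≤ c) (hsum : ∑ i, μ i = k)
    (hkc : (k + 1) * c < 1) :
    #{i | μ i ≠ 0} = k := by
  set s : Finset κ := {i | μ i ≠ 0}
  have hs : ∑ i ∈ s, μ i = k := by rw [sum_filter_ne_zero, hsum]
  have hband : ∀ i ∈ s, 1 - c ≤ μ i ∧ μ i ≤ 1 + c := fun i hi => by
    have := abs_le.1 ((hμ i).resolve_left (mem_filter.1 hi).2)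
    constructor <;> linarith [this.1, this.2]
  have hlower : (#s : ℝ) * (1 - c) ≤ k := by
    rw [← hs, ← nsmul_eq_mul, ← sum_const]
    exact sum_le_sum fun i hi => (hband i hi).1
  have hupper : (k : ℝ) ≤ #s * (1 + c) := by
    rw [← hs, ← nsmul_eq_mul, ← sum_const]
    exact sum_le_sum fun i hi => (hband i hi).2
  have hlt : #s < k + 1 := by
    by_contra! h
    have : (k : ℝ) + 1 ≤ #s := by exact_mod_cast h
    nlinarith
  have hgt : k < #s + 1 := by
    by_contra! h
    have : (#s : ℝ) + 1 ≤ k := by exact_mod_cast h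
    nlinarith
  omega

lemma ne_zero_iff_card_le_of_monotone {n : ℕ} {g : Fin n → ℝ} (hmono : Monotone g)
    (hnonneg : ∀ i, 0 ≤ g i) (i : Fin n) :
    g i ≠ 0 ↔ n - i ≤ #{j | g j ≠ 0} := by
  constructor
  · intro hi
    calc n - i = #(Ici i) := (Fin.card_Ici i).symm
      _ ≤ #{j | g j ≠ 0} := card_le_card fun j hj => mem_filter.2
          ⟨mem_univ j, ((lt_of_le_of_ne (hnonneg i) hi.symm).trans_le
            (hmono (mem_Ici.1 hj))).ne'⟩
  · intro hcard hi
    have hsub : ({j | g j ≠ 0} : Finset (Fin n)) ⊆ Ioi i := fun j hj => by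
      by_contra hji
      exact (mem_filter.1 hj).2 <|
        le_antisymm (hi ▸ hmono (not_lt.1 (mt mem_Ioi.2 hji))) (hnonneg j)
    have := (card_le_card hsub).trans_eq (Fin.card_Ioi i)
    omega

section KthEig

variable {n : ℕ} {A : Matrix (Fin n) (Fin n) ℝ}

lemma kthEig_of_isHermitian (hA : A.IsHermitian) {j : ℕ} (hj : 0 < j) (hjn : j ≤ n) :
    kthEig A j = hA.eigenvalues (Tuple.sort hA.eigenvalues ⟨n - j, by omega⟩) :=
  dif_pos ⟨hA, hj, hjn⟩

lemma kthEig_ne_zero_iff (hA : A.PosSemidef) {j : ℕ} (hj : 0 < j) (hjn : j ≤ n) :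
    kthEig A j ≠ 0 ↔ j ≤ #{i | hA.isHermitian.eigenvalues i ≠ 0} := by
  set μ := hA.isHermitian.eigenvalues
  have hcard : #{i | μ (Tuple.sort μ i) ≠ 0} = #{i | μ i ≠ 0} :=
    card_equiv (Tuple.sort μ) (by simp)
  have hsorted := ne_zero_iff_card_le_of_monotone (Tuple.monotone_sort μ)
    (fun i => hA.eigenvalues_nonneg _) ⟨n - j, by omega⟩
  simp only [Function.comp_apply] at hsorted
  rw [kthEig_of_isHermitian hA.isHermitian hj hjn, ← hcard, hsorted]
  omega

lemma kthEig_eq_zero_of_card_lt (hA : A.PosSemidef) {j : ℕ}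
    (hj : #{i | hA.isHermitian.eigenvalues i ≠ 0} < j) : kthEig A j = 0 := by
  by_cases hjn : j ≤ n
  · exact not_not.1 fun h => hj.not_ge ((kthEig_ne_zero_iff hA (by omega) hjn).1 h)
  · exact dif_neg fun h => hjn h.2.2

end KthEig

lemma add_one_mul_lt_one_of_lt_one_div {k : ℕ} (hk : 0 < k) {η : ℝ} (hη0 : 0 ≤ (k - 1) * η)
    (hη : η < 1 / ((k : ℝ) ^ 3 * ((k : ℝ) - 1))) :
    (k + 1) * ((k - 1) * η) < 1 := by
  rcases Nat.lt_or_ge k 2 with hk1 | hk2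
  · obtain rfl : k = 1 := by omega
    norm_num
  have hk2' : (2 : ℝ) ≤ k := by exact_mod_cast hk2
  have hη' : 0 ≤ η := nonneg_of_mul_nonneg_right hη0 (by linarith)
  have hprod : η * ((k : ℝ) ^ 3 * ((k : ℝ) - 1)) < 1 :=
    (lt_div_iff₀ (mul_pos (by positivity) (by linarith))).1 hη
  have hcube : (k : ℝ) + 1 ≤ (k : ℝ) ^ 3 := by
    nlinarith [mul_le_mul hk2' hk2' zero_le_two (by linarith)]
  nlinarith [mul_le_mul_of_nonneg_right hcube hη0]

lemma one_add_sqrt_div_two_le {k c : ℝ} (hk : 1 ≤ k) (hc : 0 ≤ c) (hc2 : 2 * c ≤ 1) :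
    (1 + √(1 - 4 * k * c)) / 2 ≤ 1 - c := by
  have : √(1 - 4 * k * c) ≤ 1 - 2 * c :=
    Real.sqrt_le_iff.2 ⟨by linarith, by nlinarith⟩
  linarith

/-- Let `A = Σᵢ Xᵢ Xᵢᵀ` for unit vectors `X₁,…,X_k ∈ ℝⁿ` with `n > k` and
`|Xᵢᵀ Xⱼ| ≤ η₀` for `i ≠ j`. If `η₀ < 1/(k³(k−1))` then
`λ_k(A) ≥ (1 + √(1 − 4k(k−1)η₀))/2` and `λ_j(A) = 0` for all `j > k`. -/
theorem stmt8 {n k : ℕ} (hk : 0 < k) (hnk : k < n) (η₀ : ℝ)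
    (X : Fin k → (Fin n → ℝ)) (hunit : ∀ i, X i ⬝ᵥ X i = 1)
    (hcorr : ∀ i j, i ≠ j → |X i ⬝ᵥ X j| ≤ η₀)
    (hη : η₀ < 1 / ((k : ℝ) ^ 3 * ((k : ℝ) - 1))) :
    (1 + Real.sqrt (1 - 4 * (k : ℝ) * ((k : ℝ) - 1) * η₀)) / 2
        ≤ kthEig (∑ i, vecMulVec (X i) (X i)) k ∧
      ∀ j, k < j → kthEig (∑ i, vecMulVec (X i) (X i)) j = 0 := by
  have hA := posSemidef_sum_vecMulVec_self X
  -- `η₀` may be negative when `k = 1` (no pairs), hence `max η₀ 0` in the Gram bound.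
  have hc : ((k : ℝ) - 1) * max η₀ 0 = (k - 1) * η₀ := by
    rcases Nat.lt_or_ge k 2 with hk1 | hk2
    · obtain rfl : k = 1 := by omega
      simp
    · rw [max_eq_left ((abs_nonneg _).trans (hcorr ⟨0, hk⟩ ⟨1, hk2⟩ (by simp [Fin.ext_iff])))]
  set c := ((k : ℝ) - 1) * η₀
  have hk1 : (1 : ℝ) ≤ k := Nat.one_le_cast.2 hk
  have hc0 : 0 ≤ c := hc ▸ mul_nonneg (by linarith) (le_max_right _ _)
  have hkc : (k + 1) * c < 1 := add_one_mul_lt_one_of_lt_one_div hk hc0 hη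
  set μ := hA.isHermitian.eigenvalues
  have hband : ∀ i, μ i = 0 ∨ |μ i - 1| ≤ c := fun i =>
    eq_zero_or_abs_sub_one_le (hA.eigenvalues_nonneg i) <| by
      simpa [hc] using abs_sq_sub_self_le_of_mulVec_eq_smul (le_max_right η₀ 0) hunit
        (fun i j hij => (hcorr i j hij).trans (le_max_left _ _))
        (hA.isHermitian.dotProduct_eigenvectorBasis_self i)
        (hA.isHermitian.mulVec_eigenvectorBasis i)
  have hcard : #{i | μ i ≠ 0} = k := by
    refine card_filter_ne_zero_eq hband ?_ hkc
    simpa [trace_sum_vecMulVec_self hunit] using hA.isHermitian.trace_eq_sum_eigenvalues.symm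
  refine ⟨?_, fun j hj => kthEig_eq_zero_of_card_lt hA (by rwa [hcard])⟩
  have hne := (kthEig_ne_zero_iff hA hk hnk.le).2 hcard.ge
  rw [kthEig_of_isHermitian hA.isHermitian hk hnk.le] at hne ⊢
  have hlow := (abs_le.1 ((hband _).resolve_left hne)).1
  have hroot := one_add_sqrt_div_two_le hk1 hc0 (by nlinarith)
  rw [show 4 * (k : ℝ) * (k - 1) * η₀ = 4 * k * c by ring]
  linarith
end

section
/- Let x_k be a unit vector and x_j = x_k + δ_j with ‖δ_j‖ = η₁ > 0 and |x_k^T δ_j| ≤ η₀ η₁ where η₀² < 1. Then the squared norm of the component of x_k orthogonal to x_j satisfies ‖x_k − P_{span(x_j)} x_k‖² ≥ η₁²(1 − η₀²) / (1 + η₁² + 2η₁η₀). -/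
/-!
Write `x_j = x_k + δ` and `c = x_kᵀδ`. The squared distance from `x_k` to `span x_j` is the Gram
determinant of `(x_k, x_j)` divided by `‖x_j‖²`, and the Gram determinant does not change when
`x_k` is subtracted from `x_j`, so the squared distance equals `(η₁² - c²) / (1 + 2c + η₁²)`.
Replacing `c²` by `η₀²η₁²` in the numerator and `c` by `η₀η₁` in the denominator only
decreases it.
-/

open Matrix

/-- The orthogonal projection matrix onto the span of a vector `v` (`0` if `v = 0`). -/
noncomputable def projVec {n : ℕ} (v : Fin n → ℝ) : Matrix (Fin n) (Fin n) ℝ :=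
  (v ⬝ᵥ v)⁻¹ • Matrix.vecMulVec v v

section Projection

variable {n : ℕ}

theorem projVec_mulVec (v x : Fin n → ℝ) : projVec v *ᵥ x = ((v ⬝ᵥ x) / (v ⬝ᵥ v)) • v := by
  rw [projVec, smul_mulVec, vecMulVec_mulVec, op_smul_eq_smul, smul_smul, div_eq_inv_mul]

theorem dotProduct_sub_projVec_mulVec {v : Fin n → ℝ} (hv : v ⬝ᵥ v ≠ 0) (x : Fin n → ℝ) :
    (x - projVec v *ᵥ x) ⬝ᵥ (x - projVec v *ᵥ x)
      = (x ⬝ᵥ x * (v ⬝ᵥ v) - (v ⬝ᵥ x) ^ 2) / (v ⬝ᵥ v) := by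
  rw [projVec_mulVec, dotProduct_sub, sub_dotProduct, sub_dotProduct, dotProduct_smul,
    smul_dotProduct, smul_dotProduct, dotProduct_smul, dotProduct_comm x v]
  simp only [smul_eq_mul]
  field_simp
  ring

theorem dotProduct_sub_projVec_add_mulVec {x δ : Fin n → ℝ} (h : (x + δ) ⬝ᵥ (x + δ) ≠ 0) :
    (x - projVec (x + δ) *ᵥ x) ⬝ᵥ (x - projVec (x + δ) *ᵥ x)
      = (x ⬝ᵥ x * (δ ⬝ᵥ δ) - (x ⬝ᵥ δ) ^ 2) / ((x + δ) ⬝ᵥ (x + δ)) := by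
  rw [dotProduct_sub_projVec_mulVec h]
  congr 1
  simp only [dotProduct_add, add_dotProduct, dotProduct_comm δ x]
  ring

end Projection

section Bound

variable {c η₀ η₁ : ℝ}

theorem one_add_two_mul_add_sq_pos (hc : |c| ≤ η₀ * η₁) (hη₀ : η₀ ^ 2 < 1) :
    0 < 1 + 2 * c + η₁ ^ 2 := by
  have hc_ge : -(η₀ * η₁) ≤ c := (abs_le.mp hc).1
  -- `1 - 2η₀η₁ + η₁² = (1 - η₀η₁)² + η₁²(1 - η₀²)`
  nlinarith [sq_nonneg (η₀ * η₁ - 1), sq_nonneg (η₀ - η₁)]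

theorem div_le_sq_sub_sq_div_of_abs_le (hc : |c| ≤ η₀ * η₁) (hη₀ : η₀ ^ 2 < 1) :
    η₁ ^ 2 * (1 - η₀ ^ 2) / (1 + η₁ ^ 2 + 2 * η₁ * η₀)
      ≤ (η₁ ^ 2 - c ^ 2) / (1 + 2 * c + η₁ ^ 2) := by
  have hc_le : c ≤ η₀ * η₁ := (abs_le.mp hc).2
  have hc_sq : c ^ 2 ≤ (η₀ * η₁) ^ 2 := sq_le_sq' (abs_le.mp hc).1 hc_le
  exact div_le_div₀ (by nlinarith) (by nlinarith) (one_add_two_mul_add_sq_pos hc hη₀)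
    (by nlinarith)

end Bound

theorem stmt11_general {n : ℕ} (xk δ : Fin n → ℝ) (η₀ η₁ : ℝ)
    (hxk : xk ⬝ᵥ xk = 1) (hδ : δ ⬝ᵥ δ = η₁ ^ 2)
    (hcorr : |xk ⬝ᵥ δ| ≤ η₀ * η₁) (hη₀lt : η₀ ^ 2 < 1) :
    η₁ ^ 2 * (1 - η₀ ^ 2) / (1 + η₁ ^ 2 + 2 * η₁ * η₀)
      ≤ (xk - projVec (xk + δ) *ᵥ xk) ⬝ᵥ (xk - projVec (xk + δ) *ᵥ xk) := by
  have hnorm : (xk + δ) ⬝ᵥ (xk + δ) = 1 + 2 * (xk ⬝ᵥ δ) + η₁ ^ 2 := by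
    simp only [dotProduct_add, add_dotProduct, dotProduct_comm δ xk, hxk, hδ]
    ring
  have hpos := one_add_two_mul_add_sq_pos hcorr hη₀lt
  rw [dotProduct_sub_projVec_add_mulVec (hnorm ▸ hpos.ne'), hnorm, hxk, hδ, one_mul]
  exact div_le_sq_sub_sq_div_of_abs_le hcorr hη₀lt

/-- Let `x_k` be a unit vector and `x_j = x_k + δ` with `‖δ‖ = η₁ > 0`,
`|x_kᵀ δ| ≤ η₀ η₁`, `0 ≤ η₀` and `η₀² < 1`. Then
`‖x_k − P_{span x_j} x_k‖² ≥ η₁²(1 − η₀²)/(1 + η₁² + 2η₁η₀)`. -/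
theorem stmt11 {n : ℕ} (xk δ : Fin n → ℝ) (η₀ η₁ : ℝ)
    (hxk : xk ⬝ᵥ xk = 1) (hδ : δ ⬝ᵥ δ = η₁ ^ 2) (hη₁ : 0 < η₁)
    (hcorr : |xk ⬝ᵥ δ| ≤ η₀ * η₁) (hη₀ : 0 ≤ η₀) (hη₀lt : η₀ ^ 2 < 1) :
    η₁ ^ 2 * (1 - η₀ ^ 2) / (1 + η₁ ^ 2 + 2 * η₁ * η₀)
      ≤ (xk - projVec (xk + δ) *ᵥ xk) ⬝ᵥ (xk - projVec (xk + δ) *ᵥ xk) :=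
  stmt11_general xk δ η₀ η₁ hxk hδ hcorr hη₀lt
end

section
/- Let x_j = x_k + δ_j where x_k is a unit vector, ‖δ_j‖ = η₁ > 0, and |x_k^T δ_j| ≤ η₀η₁ with 2η₁η₀ < 1 + η₁². Then the alignment of x_j with its own perturbation direction satisfies trace(P_{span(x_j)} P_{span(δ_j)}) ≤ (η₁ + η₀)² / (1 + η₁² − 2η₁η₀). -/
/-! The trace is the squared cosine `(uᵀv)² / (‖u‖²‖v‖²)` of the angle between `u = x_k + δ` and
`v = δ`. With `c = x_kᵀδ` this is `(c + η₁²)² / ((1 + 2c + η₁²) η₁²)`, and `|c| ≤ η₀η₁` bounds the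
numerator by `(η₁ + η₀)² η₁²` and the denominator below by `(1 + η₁² - 2η₁η₀) η₁² > 0`. -/

open Matrix

theorem trace_projVec_mul_projVec {n : ℕ} (u v : Fin n → ℝ) :
    (projVec u * projVec v).trace = (u ⬝ᵥ v) ^ 2 / ((u ⬝ᵥ u) * (v ⬝ᵥ v)) := by
  rw [projVec, projVec, smul_mul_smul_comm, vecMulVec_mul_vecMulVec, trace_smul,
    trace_vecMulVec, dotProduct_smul, smul_eq_mul, smul_eq_mul]
  ring

theorem sq_add_sq_div_le_of_abs_le {c η₀ η₁ : ℝ} (hη₁ : 0 < η₁) (hc : |c| ≤ η₀ * η₁)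
    (hsmall : 2 * η₁ * η₀ < 1 + η₁ ^ 2) :
    (c + η₁ ^ 2) ^ 2 / ((1 + 2 * c + η₁ ^ 2) * η₁ ^ 2)
      ≤ (η₁ + η₀) ^ 2 / (1 + η₁ ^ 2 - 2 * η₁ * η₀) := by
  obtain ⟨hc_lower, hc_upper⟩ := abs_le.1 hc
  have hη₁_sq : 0 < η₁ ^ 2 := by positivity
  have hden_pos : 0 < 1 + η₁ ^ 2 - 2 * η₁ * η₀ := by linarith
  have hden_le : (1 + η₁ ^ 2 - 2 * η₁ * η₀) * η₁ ^ 2 ≤ (1 + 2 * c + η₁ ^ 2) * η₁ ^ 2 := by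
    gcongr
    linarith
  have hnum_le : (c + η₁ ^ 2) ^ 2 ≤ ((η₁ + η₀) * η₁) ^ 2 := by
    apply sq_le_sq' <;> nlinarith
  calc (c + η₁ ^ 2) ^ 2 / ((1 + 2 * c + η₁ ^ 2) * η₁ ^ 2)
      ≤ ((η₁ + η₀) * η₁) ^ 2 / ((1 + η₁ ^ 2 - 2 * η₁ * η₀) * η₁ ^ 2) :=
        div_le_div₀ (sq_nonneg _) hnum_le (mul_pos hden_pos hη₁_sq) hden_le
    _ = (η₁ + η₀) ^ 2 / (1 + η₁ ^ 2 - 2 * η₁ * η₀) := by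
        rw [mul_pow, mul_div_mul_right _ _ hη₁_sq.ne']

/-- Let `x_j = x_k + δ` where `x_k` is a unit vector, `‖δ‖ = η₁ > 0`,
`|x_kᵀ δ| ≤ η₀η₁` and `2η₁η₀ < 1 + η₁²`. Then
`trace (P_{span x_j} P_{span δ}) ≤ (η₁ + η₀)²/(1 + η₁² − 2η₁η₀)`. -/
theorem stmt12 {n : ℕ} (xk δ : Fin n → ℝ) (η₀ η₁ : ℝ)
    (hxk : xk ⬝ᵥ xk = 1) (hδ : δ ⬝ᵥ δ = η₁ ^ 2) (hη₁ : 0 < η₁)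
    (hcorr : |xk ⬝ᵥ δ| ≤ η₀ * η₁) (hsmall : 2 * η₁ * η₀ < 1 + η₁ ^ 2) :
    (projVec (xk + δ) * projVec δ).trace
      ≤ (η₁ + η₀) ^ 2 / (1 + η₁ ^ 2 - 2 * η₁ * η₀) := by
  have hcross : (xk + δ) ⬝ᵥ δ = xk ⬝ᵥ δ + η₁ ^ 2 := by rw [add_dotProduct, hδ]
  have hnorm : (xk + δ) ⬝ᵥ (xk + δ) = 1 + 2 * (xk ⬝ᵥ δ) + η₁ ^ 2 := by
    rw [add_dotProduct, dotProduct_add, dotProduct_add, hxk, hδ, dotProduct_comm δ xk]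
    ring
  rw [trace_projVec_mul_projVec, hcross, hnorm, hδ]
  exact sq_add_sq_div_le_of_abs_le hη₁ hcorr hsmall
end

section
/- Suppose X_S has pairwise orthogonal nonzero columns indexed by S, and P_avg = (1/B) Σ_ℓ P_{col(X_{S_ℓ})} where each S_ℓ ⊆ {1,…,p} and all columns of X are pairwise orthogonal. Then π(S) := σ_{|S|}(P_{col(X_S)} P_avg P_{col(X_S)}) equals min over j ∈ S of (1/B)·#{ℓ : j ∈ S_ℓ}, i.e., for orthogonal features the subspace stability reduces to the minimum selection proportion of the features in S. -/
/-
With `g j = ‖X_j‖²` and orthogonal columns, `Xᵀ X = diagonal g`, so matrices of the form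
`X * diagonal w * Xᵀ` multiply by multiplying weights: `(X D_a Xᵀ)(X D_b Xᵀ) = X D_{a g b} Xᵀ`. Each sum of column projections is
of this form, hence so is `P_S P_avg P_S = X * diagonal (1_S c / g) * Xᵀ`, where `c` are the
selection proportions. Writing it as `A * B` with `B * A = diagonal (1_S c)`, the identity
`χ_{AB} = X^(n-p) χ_{BA}` shows that its eigenvalues are `n - p` zeros together with `c j` for
`j ∈ S` and `0` for `j ∉ S`. As all `c j ≥ 0`, the `|S|`-th largest of them is `min_{j ∈ S} c j`.
-/

open Matrix

open Finset

theorem Finset.sum_sum_mem_eq_sum_card_nsmul {ι κ M : Type*} [Fintype ι] [Fintype κ]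
    [DecidableEq κ] [AddCommMonoid M] (s : ι → Finset κ) (f : κ → M) :
    ∑ i, ∑ j ∈ s i, f j = ∑ j, #{i | j ∈ s i} • f j := by
  calc ∑ i, ∑ j ∈ s i, f j = ∑ i, ∑ j, if j ∈ s i then f j else 0 := by
        simp only [sum_ite_mem, univ_inter]
    _ = ∑ j, ∑ i, if j ∈ s i then f j else 0 := sum_comm
    _ = ∑ j, #{i | j ∈ s i} • f j := by
        simp only [sum_ite, sum_const_zero, add_zero, sum_const]

section
variable {R : Type*} [CommSemiring R] {m k : Type*} [DecidableEq k]

theorem Matrix.mul_diagonal_mul_transpose_eq_sum [Fintype k] (X : Matrix m k R) (w : k → R) :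
    X * diagonal w * Xᵀ = ∑ j, w j • vecMulVec (fun i => X i j) (fun i => X i j) := by
  ext a b
  rw [mul_apply]
  simp only [mul_diagonal, transpose_apply, sum_apply, smul_apply, vecMulVec_apply, smul_eq_mul]
  exact sum_congr rfl fun j _ => by ring

theorem Matrix.transpose_mul_self_eq_diagonal [Fintype m] (X : Matrix m k R)
    (horth : ∀ j l, j ≠ l → (fun i => X i j) ⬝ᵥ (fun i => X i l) = 0) :
    Xᵀ * X = diagonal fun j => (fun i => X i j) ⬝ᵥ (fun i => X i j) := by
  ext j l
  rcases eq_or_ne j l with rfl | hjl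
  · simp [mul_apply, dotProduct]
  · simpa [mul_apply, dotProduct, hjl] using horth j l hjl

theorem Matrix.mul_diagonal_mul_transpose_mul_mul_diagonal_mul_transpose
    [Fintype m] [Fintype k] {X : Matrix m k R} {g : k → R} (hX : Xᵀ * X = diagonal g)
    (a b : k → R) :
    X * diagonal a * Xᵀ * (X * diagonal b * Xᵀ) = X * diagonal (a * g * b) * Xᵀ := by
  calc X * diagonal a * Xᵀ * (X * diagonal b * Xᵀ)
      _ = X * (diagonal a * (Xᵀ * X) * diagonal b) * Xᵀ := by simp only [Matrix.mul_assoc]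
      _ = X * diagonal (a * g * b) * Xᵀ := by
        rw [hX, diagonal_mul_diagonal', diagonal_mul_diagonal']
        rfl

theorem Matrix.isHermitian_mul_diagonal_mul_transpose [Fintype k] (X : Matrix m k ℝ)
    (w : k → ℝ) :
    (X * (diagonal w * Xᵀ)).IsHermitian := by
  simpa [Matrix.mul_assoc, conjTranspose_eq_transpose_of_trivial] using
    isHermitian_mul_mul_conjTranspose X (isHermitian_diagonal w)

theorem Matrix.card_le_of_transpose_mul_self_eq_diagonal {K : Type*} [Field K] {n p : ℕ}
    {X : Matrix (Fin n) (Fin p) K} {g : Fin p → K} (hX : Xᵀ * X = diagonal g)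
    (hg : ∀ j, g j ≠ 0) : p ≤ n := by
  classical
  calc p = (diagonal g).rank := by simp [rank_diagonal, hg]
    _ = (Xᵀ * X).rank := by rw [hX]
    _ ≤ X.rank := rank_mul_le_right _ _
    _ ≤ n := X.rank_le_height

end

theorem sum_smul_projVec {n p : ℕ} (X : Matrix (Fin n) (Fin p) ℝ) (w : Fin p → ℝ) :
    ∑ j, w j • projVec (fun i => X i j) =
      X * diagonal (fun j => w j / (fun i => X i j) ⬝ᵥ (fun i => X i j)) * Xᵀ := by
  rw [mul_diagonal_mul_transpose_eq_sum]
  exact sum_congr rfl fun j _ => by rw [projVec, smul_smul, div_eq_mul_inv]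

theorem sum_projVec_eq {n p : ℕ} (X : Matrix (Fin n) (Fin p) ℝ) (T : Finset (Fin p)) :
    ∑ j ∈ T, projVec (fun i => X i j) =
      X * diagonal (fun j => (if j ∈ T then 1 else 0) / (fun i => X i j) ⬝ᵥ (fun i => X i j)) *
        Xᵀ := by
  rw [← sum_smul_projVec]
  simp [ite_smul]

theorem smul_sum_sum_projVec_eq {n p : ℕ} {ι : Type*} [Fintype ι]
    (X : Matrix (Fin n) (Fin p) ℝ) (Sl : ι → Finset (Fin p)) (r : ℝ) :
    r • ∑ ℓ, ∑ j ∈ Sl ℓ, projVec (fun i => X i j) =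
      X * diagonal (fun j => r * #{ℓ | j ∈ Sl ℓ} / (fun i => X i j) ⬝ᵥ (fun i => X i j)) *
        Xᵀ := by
  rw [← sum_smul_projVec, sum_sum_mem_eq_sum_card_nsmul, smul_sum]
  refine sum_congr rfl fun j _ => ?_
  rw [← Nat.cast_smul_eq_nsmul ℝ, smul_smul]

section
variable {m k : Type*} [Fintype m] [DecidableEq m] [Fintype k] [DecidableEq k]

open Polynomial in
theorem Matrix.IsHermitian.eigenvalues_map_eq_of_mul_eq_diagonal {A : Matrix m k ℝ}
    {B : Matrix k m ℝ} (hAB : (A * B).IsHermitian) {d : k → ℝ} (hBA : B * A = diagonal d)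
    (hk : Fintype.card k ≤ Fintype.card m) :
    univ.val.map hAB.eigenvalues =
      Multiset.replicate (Fintype.card m - Fintype.card k) 0 + univ.val.map d := by
  have hprod : (∏ i, (X - C (d i))).roots = univ.val.map d := by
    simpa [Multiset.map_map, Function.comp_def] using
      roots_multiset_prod_X_sub_C (univ.val.map d)
  have h := hAB.roots_charpoly_eq_eigenvalues
  rw [charpoly_mul_comm_of_le A B hk, hBA, charpoly_diagonal, roots_mul, roots_X_pow, hprod] at h
  · simpa [Multiset.nsmul_singleton] using h.symm
  · exact mul_ne_zero (pow_ne_zero _ X_ne_zero)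
      (monic_prod_of_monic _ _ fun i _ => monic_X_sub_C (d i)).ne_zero

end

theorem Monotone.apply_eq_of_card_filter {α : Type*} [LinearOrder α] {n : ℕ} {g : Fin n → α}
    (hg : Monotone g) {a : α} (i : Fin n) (hlt : #{j | g j < a} ≤ i)
    (hgt : #{j | a < g j} < n - i) : g i = a := by
  refine le_antisymm (not_lt.mp fun hi => ?_) (not_lt.mp fun hi => ?_)
  · have : #(Ici i) ≤ #{j | a < g j} := card_le_card fun j hj =>
      mem_filter.mpr ⟨mem_univ j, hi.trans_le (hg (mem_Ici.mp hj))⟩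
    rw [Fin.card_Ici] at this
    omega
  · have : #(Iic i) ≤ #{j | g j < a} := card_le_card fun j hj =>
      mem_filter.mpr ⟨mem_univ j, (hg (mem_Iic.mp hj)).trans_lt hi⟩
    rw [Fin.card_Iic] at this
    omega

theorem kthEig_eq_of_countP {n : ℕ} {A : Matrix (Fin n) (Fin n) ℝ} (hA : A.IsHermitian) {k : ℕ}
    (hk : 0 < k) (hkn : k ≤ n) {a : ℝ}
    (hlt : (univ.val.map hA.eigenvalues).countP (· < a) ≤ n - k)
    (hgt : (univ.val.map hA.eigenvalues).countP (a < ·) < k) :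
    kthEig A k = a := by
  rw [kthEig, dif_pos ⟨hA, hk, hkn⟩]
  have hcount (p : ℝ → Prop) [DecidablePred p] : (univ.val.map hA.eigenvalues).countP p =
      #{i | p (hA.eigenvalues (Tuple.sort hA.eigenvalues i))} := by
    have hσ := congrArg Finset.val (map_univ_equiv (Tuple.sort hA.eigenvalues))
    rw [map_val] at hσ
    rw [← hσ, Multiset.map_map, Multiset.countP_map]
    rfl
  rw [hcount] at hlt hgt
  exact (Tuple.monotone_sort hA.eigenvalues).apply_eq_of_card_filter _ hlt
    (by simp only [Function.comp_apply]; omega)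

theorem kthEig_card_eq_inf' {n p : ℕ} {A : Matrix (Fin n) (Fin n) ℝ} (hA : A.IsHermitian)
    (hpn : p ≤ n) {S : Finset (Fin p)} (hS : S.Nonempty) {c : Fin p → ℝ} (hc : ∀ j ∈ S, 0 ≤ c j)
    (hspec : univ.val.map hA.eigenvalues =
      Multiset.replicate (n - p) 0 + univ.val.map fun j => if j ∈ S then c j else 0) :
    kthEig A #S = S.inf' hS c := by
  have hSp : #S ≤ p := by simpa using card_le_univ S
  obtain ⟨j₀, hj₀, hmin⟩ := exists_mem_eq_inf' hS c
  refine kthEig_eq_of_countP hA hS.card_pos (hSp.trans hpn) ?_ ?_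
  · have hcompl : #{j | (if j ∈ S then c j else 0) < S.inf' hS c} ≤ #Sᶜ :=
      card_le_card fun j hj => mem_compl.mpr fun hjS => by
        have := (mem_filter.mp hj).2
        rw [if_pos hjS] at this
        exact (inf'_le c hjS).not_gt this
    have hzeros := Multiset.countP_le_card (· < S.inf' hS c) (Multiset.replicate (n - p) (0 : ℝ))
    rw [card_compl, Fintype.card_fin] at hcompl
    rw [Multiset.card_replicate] at hzeros
    rw [hspec, Multiset.countP_add, Multiset.countP_map, ← filter_val, ← card_def]
    omega
  · have herase : #{j | S.inf' hS c < if j ∈ S then c j else 0} ≤ #(S.erase j₀) :=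
      card_le_card fun j hj => by
        have hlt := (mem_filter.mp hj).2
        have hjS : j ∈ S := by
          by_contra hjS
          rw [if_neg hjS] at hlt
          exact hlt.not_ge (le_inf' hS c hc)
        rw [if_pos hjS, hmin] at hlt
        exact mem_erase.mpr ⟨fun h => hlt.ne (h ▸ rfl), hjS⟩
    have hzeros : (Multiset.replicate (n - p) (0 : ℝ)).countP (S.inf' hS c < ·) = 0 :=
      Multiset.countP_eq_zero.mpr fun x hx => by
        rw [Multiset.eq_of_mem_replicate hx]
        exact (le_inf' hS c hc).not_gt
    rw [card_erase_of_mem hj₀] at herase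
    rw [hspec, Multiset.countP_add, Multiset.countP_map, ← filter_val, ← card_def, hzeros]
    have := hS.card_pos
    omega

theorem stmt19_general {n p B : ℕ} (X : Matrix (Fin n) (Fin p) ℝ)
    (hnz : ∀ j : Fin p, (fun i => X i j) ≠ 0)
    (horth : ∀ j k : Fin p, j ≠ k → (fun i => X i j) ⬝ᵥ (fun i => X i k) = 0)
    (Sl : Fin B → Finset (Fin p)) (S : Finset (Fin p)) (hS : S.Nonempty) :
    kthEig ((∑ j ∈ S, projVec (fun i => X i j)) *
        ((1 / (B : ℝ)) • ∑ ℓ, ∑ j ∈ Sl ℓ, projVec (fun i => X i j)) *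
        (∑ j ∈ S, projVec (fun i => X i j))) S.card
      = S.inf' hS (fun j => ((Finset.univ.filter fun ℓ => j ∈ Sl ℓ).card : ℝ) / B) := by
  set g : Fin p → ℝ := fun j => (fun i => X i j) ⬝ᵥ (fun i => X i j)
  set c : Fin p → ℝ := fun j => (#{ℓ | j ∈ Sl ℓ} : ℝ) / B
  set d : Fin p → ℝ := fun j => if j ∈ S then c j else 0
  have hg (j : Fin p) : g j ≠ 0 := fun h => hnz j (dotProduct_self_eq_zero.mp h)
  have hXX : Xᵀ * X = diagonal g := transpose_mul_self_eq_diagonal X horth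
  have hM : (∑ j ∈ S, projVec (fun i => X i j)) *
        ((1 / (B : ℝ)) • ∑ ℓ, ∑ j ∈ Sl ℓ, projVec (fun i => X i j)) *
        (∑ j ∈ S, projVec (fun i => X i j)) = X * (diagonal (fun j => d j / g j) * Xᵀ) := by
    rw [sum_projVec_eq, smul_sum_sum_projVec_eq,
      mul_diagonal_mul_transpose_mul_mul_diagonal_mul_transpose hXX,
      mul_diagonal_mul_transpose_mul_mul_diagonal_mul_transpose hXX, Matrix.mul_assoc]
    congr 3
    ext j
    by_cases hj : j ∈ S
    · have hgj : (fun i => X i j) ⬝ᵥ (fun i => X i j) ≠ 0 := hg j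
      simp only [Pi.mul_apply, d, c, g, if_pos hj]
      field_simp
    · simp [d, hj]
  have hdiag : diagonal (fun j => d j / g j) * Xᵀ * X = diagonal d := by
    rw [Matrix.mul_assoc, hXX, diagonal_mul_diagonal]
    congr 1
    ext j
    field_simp [hg j]
  have hpn : p ≤ n := card_le_of_transpose_mul_self_eq_diagonal hXX hg
  have hHerm := isHermitian_mul_diagonal_mul_transpose X fun j => d j / g j
  rw [hM]
  exact kthEig_card_eq_inf' hHerm hpn hS (fun j _ => by positivity)
    (by simpa using hHerm.eigenvalues_map_eq_of_mul_eq_diagonal hdiag (by simpa using hpn))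

/-- Suppose all columns of `X` are nonzero and pairwise orthogonal, so that
`P_{col(X_T)} = Σ_{j∈T} X_j X_jᵀ/‖X_j‖²` for every `T`. With
`P_avg = (1/B) Σ_ℓ P_{col(X_{S_ℓ})}`, the stability
`π(S) = σ_{|S|}(P_{col(X_S)} P_avg P_{col(X_S)})` equals the minimum selection proportion
`min_{j ∈ S} (1/B)·#{ℓ : j ∈ S_ℓ}`. -/
theorem stmt19 {n p B : ℕ} (hB : 0 < B) (X : Matrix (Fin n) (Fin p) ℝ)
    (hnz : ∀ j : Fin p, (fun i => X i j) ≠ 0)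
    (horth : ∀ j k : Fin p, j ≠ k → (fun i => X i j) ⬝ᵥ (fun i => X i k) = 0)
    (Sl : Fin B → Finset (Fin p)) (S : Finset (Fin p)) (hS : S.Nonempty) :
    kthEig ((∑ j ∈ S, projVec (fun i => X i j)) *
        ((1 / (B : ℝ)) • ∑ ℓ, ∑ j ∈ Sl ℓ, projVec (fun i => X i j)) *
        (∑ j ∈ S, projVec (fun i => X i j))) S.card
      = S.inf' hS (fun j => ((Finset.univ.filter fun ℓ => j ∈ Sl ℓ).card : ℝ) / B) :=
  stmt19_general X hnz horth Sl S hS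
end
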